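/- arXiv:2102.12662 — 6 statements merged into one kernel-verified Lean document; each statement's English description precedes it below -/
import Mathlib

section
/- Let L be a thin Lie algebra over a field of characteristic ≠ 2 with dim(L_3) = 1, let y span C_{L_1}(L_2), and extend to a basis x, y of L_1. Suppose L_{i-1} contains a nonzero element u with [u,y] = 0, and [L_i, y] ≠ 0. Then L_i is one-dimensional (spanned by [u,x]), [L_i y y] = 0, and L_{i+2} is one-dimensional (spanned by [u x y x]). -/
/-!
If `⁅z, y⁆ = 0` for a nonzero homogeneous `z`, covering gives `L_{k+1} = span ⁅z, x⁆`; applied to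
`u` this yields `L_{i+1} = span [u x]`. Since `y` centralizes `u`, the bracket with `y` passes
through `u`: `[u x y y] = [u [x y y]] = 0`, as `y` centralizes `L_2 ∋ [x y]`. The hypothesis
`[L_{i+1}, y] ≠ 0` makes `[u x y]` nonzero, and it is centralized by `y`, so covering applies
again to give `L_{i+3} = span [u x y x]`.
-/

open Module

/-- A thin Lie algebra structure: a grading of `L` over the positive integers
(`C 0 = ⊥`), internal direct sum, compatible with the bracket, with `L₁`
two-dimensional and generating `L`, `L` infinite-dimensional, and satisfying
the covering property: for every nonzero homogeneous `z ∈ Lᵢ`,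
`span [z, L₁] = L_{i+1}`. -/
structure IsThinGraded (F : Type*) (L : Type*) [Field F] [LieRing L] [LieAlgebra F L]
    (C : ℕ → Submodule F L) : Prop where
  zero_bot : C 0 = ⊥
  internal : DirectSum.IsInternal C
  bracket_mem : ∀ i j : ℕ, ∀ u ∈ C i, ∀ v ∈ C j, ⁅u, v⁆ ∈ C (i + j)
  dim_one : Module.finrank F (C 1) = 2
  generates : LieSubalgebra.lieSpan F L ((C 1 : Submodule F L) : Set L) = ⊤
  infinite_dim : ¬ Module.Finite F L
  covering : ∀ i : ℕ, ∀ z ∈ C i, z ≠ 0 →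
    Submodule.span F {w : L | ∃ a ∈ C 1, w = ⁅z, a⁆} = C (i + 1)

section LieRing

variable {L : Type*} [LieRing L]

theorem lie_lie_eq_lie_lie_of_lie_eq_zero {u y : L} (huy : ⁅u, y⁆ = 0) (v : L) :
    ⁅⁅u, v⁆, y⁆ = ⁅u, ⁅v, y⁆⁆ := by
  rw [lie_lie, huy, lie_zero, sub_zero]

theorem lie_lie_lie_eq_zero_of_lie_eq_zero {u x y : L} (huy : ⁅u, y⁆ = 0)
    (hxyy : ⁅⁅x, y⁆, y⁆ = 0) : ⁅⁅⁅u, x⁆, y⁆, y⁆ = 0 := by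
  rw [lie_lie_eq_lie_lie_of_lie_eq_zero huy, lie_lie_eq_lie_lie_of_lie_eq_zero huy, hxyy,
    lie_zero]

end LieRing

theorem span_lie_span_pair_eq_span_singleton {R L : Type*} [CommRing R] [LieRing L]
    [LieAlgebra R L] {x y z : L} (hzy : ⁅z, y⁆ = 0) :
    Submodule.span R {w : L | ∃ a ∈ Submodule.span R {x, y}, w = ⁅z, a⁆} = R ∙ ⁅z, x⁆ := by
  apply le_antisymm
  · rw [Submodule.span_le]
    rintro w ⟨a, ha, rfl⟩
    obtain ⟨c, d, rfl⟩ := Submodule.mem_span_pair.mp ha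
    rw [SetLike.mem_coe, lie_add, lie_smul, lie_smul, hzy, smul_zero, add_zero]
    exact Submodule.smul_mem _ _ (Submodule.mem_span_singleton_self _)
  · rw [Submodule.span_le, Set.singleton_subset_iff]
    exact Submodule.subset_span ⟨x, Submodule.subset_span (by simp), rfl⟩

namespace IsThinGraded

variable {F L : Type*} [Field F] [LieRing L] [LieAlgebra F L] {C : ℕ → Submodule F L}

theorem eq_span_lie_of_lie_eq_zero (hthin : IsThinGraded F L C) {x y : L}
    (hbasis : Submodule.span F {x, y} = C 1) {i : ℕ} {z : L} (hz : z ∈ C i) (hz0 : z ≠ 0)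
    (hzy : ⁅z, y⁆ = 0) : C (i + 1) = F ∙ ⁅z, x⁆ := by
  rw [← hthin.covering i z hz hz0, ← hbasis, span_lie_span_pair_eq_span_singleton hzy]

end IsThinGraded

theorem thin_uxyy_general {F L : Type*} [Field F] [LieRing L] [LieAlgebra F L]
    {C : ℕ → Submodule F L} (hthin : IsThinGraded F L C)
    {x y : L} (hy1 : y ∈ C 1) (hyc : ∀ v ∈ C 2, ⁅y, v⁆ = 0)
    (hbasis : Submodule.span F {x, y} = C 1)
    {i : ℕ} {u : L} (hu : u ∈ C i) (hu0 : u ≠ 0) (huy : ⁅u, y⁆ = 0)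
    (hLi : ∃ w ∈ C (i + 1), ⁅w, y⁆ ≠ 0) :
    C (i + 1) = Submodule.span F {⁅u, x⁆} ∧
    (∀ w ∈ C (i + 1), ⁅⁅w, y⁆, y⁆ = 0) ∧
    C (i + 3) = Submodule.span F {⁅⁅⁅u, x⁆, y⁆, x⁆} := by
  have hC : C (i + 1) = F ∙ ⁅u, x⁆ := hthin.eq_span_lie_of_lie_eq_zero hbasis hu hu0 huy
  have hx1 : x ∈ C 1 := hbasis ▸ Submodule.subset_span (by simp)
  have hxyy : ⁅⁅x, y⁆, y⁆ = 0 := by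
    rw [← lie_skew, hyc _ (hthin.bracket_mem 1 1 x hx1 y hy1), neg_zero]
  have huxyy : ⁅⁅⁅u, x⁆, y⁆, y⁆ = 0 := lie_lie_lie_eq_zero_of_lie_eq_zero huy hxyy
  have hyy : ∀ w ∈ C (i + 1), ⁅⁅w, y⁆, y⁆ = 0 := by
    intro w hw
    obtain ⟨c, rfl⟩ := Submodule.mem_span_singleton.mp (hC ▸ hw)
    rw [smul_lie, smul_lie, huxyy, smul_zero]
  have huxy0 : ⁅⁅u, x⁆, y⁆ ≠ 0 := by
    obtain ⟨w, hw, hwy⟩ := hLi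
    obtain ⟨c, rfl⟩ := Submodule.mem_span_singleton.mp (hC ▸ hw)
    intro h
    exact hwy (by rw [smul_lie, h, smul_zero])
  have huxy : ⁅⁅u, x⁆, y⁆ ∈ C (i + 2) :=
    hthin.bracket_mem (i + 1) 1 _ (hthin.bracket_mem i 1 u hu x hx1) y hy1
  exact ⟨hC, hyy, hthin.eq_span_lie_of_lie_eq_zero hbasis huxy huxy0 huxyy⟩

/-- Lemma (uxyy): if `L_{i}` has a nonzero element `u` centralized by `y` and
`[L_{i+1}, y] ≠ 0`, then `L_{i+1}` is one-dimensional spanned by `[u,x]`,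
`[L_{i+1} y y] = 0`, and `L_{i+3}` is one-dimensional spanned by `[uxyx]`. -/
theorem thin_uxyy {F L : Type*} [Field F] [LieRing L] [LieAlgebra F L]
    (h2 : (2 : F) ≠ 0)
    {C : ℕ → Submodule F L} (hthin : IsThinGraded F L C)
    (h3 : Module.finrank F (C 3) = 1)
    {x y : L} (hy1 : y ∈ C 1) (hy0 : y ≠ 0) (hyc : ∀ v ∈ C 2, ⁅y, v⁆ = 0)
    (hx1 : x ∈ C 1) (hbasis : Submodule.span F {x, y} = C 1)
    {i : ℕ} (hi : 1 ≤ i) {u : L} (hu : u ∈ C i) (hu0 : u ≠ 0) (huy : ⁅u, y⁆ = 0)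
    (hLi : ∃ w ∈ C (i + 1), ⁅w, y⁆ ≠ 0) :
    C (i + 1) = Submodule.span F {⁅u, x⁆} ∧
    (∀ w ∈ C (i + 1), ⁅⁅w, y⁆, y⁆ = 0) ∧
    C (i + 3) = Submodule.span F {⁅⁅⁅u, x⁆, y⁆, x⁆} :=
  thin_uxyy_general hthin hy1 hyc hbasis hu hu0 huy hLi
end

section
/- Let L be a thin Lie algebra over a field of characteristic ≠ 2 with dim(L_3) = 1, and let y span C_{L_1}(L_2). In any two consecutive homogeneous components L_i, L_{i+1} (with i ≥ 1), at least one contains a nonzero element centralized by y. -/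
open Module

theorem LieSubalgebra.submodule_eq_top_of_lie_mem {R L : Type*} [CommRing R] [LieRing L]
    [LieAlgebra R L] {S : Set L} (hS : lieSpan R L S = ⊤) {M : Submodule R L} (hSM : S ⊆ M)
    (hlie : ∀ s ∈ S, ∀ m ∈ M, ⁅s, m⁆ ∈ M) : M = ⊤ := by
  -- by Jacobi, the elements `x` with `⁅x, M⁆ ⊆ M` form a Lie subalgebra
  have hall : ∀ x : L, ∀ m ∈ M, ⁅x, m⁆ ∈ M := fun x => by
    have hx : x ∈ lieSpan R L S := hS ▸ mem_top x
    induction hx using lieSpan_induction with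
    | mem x hx => exact hlie x hx
    | zero => simp
    | add x y _ _ hx hy =>
      intro m hm
      rw [add_lie]
      exact M.add_mem (hx m hm) (hy m hm)
    | smul a x _ hx =>
      intro m hm
      rw [smul_lie]
      exact M.smul_mem a (hx m hm)
    | lie x y _ _ hx hy =>
      intro m hm
      rw [lie_lie]
      exact M.sub_mem (hx _ (hy m hm)) (hy _ (hx m hm))
  let K : LieSubalgebra R L := { M with lie_mem' := fun {x y} _ hy => hall x y hy }
  have hK : lieSpan R L S ≤ K := lieSpan_le.mpr hSM
  rw [hS] at hK
  exact Submodule.eq_top_iff'.mpr fun x => hK (mem_top x)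

namespace IsThinGraded

variable {F L : Type*} [Field F] [LieRing L] [LieAlgebra F L] {C : ℕ → Submodule F L}

theorem map_ad_eq (hthin : IsThinGraded F L C) {i : ℕ} {z : L} (hz : z ∈ C i) (hz0 : z ≠ 0) :
    (C 1).map (LieAlgebra.ad F L z) = C (i + 1) := by
  rw [← hthin.covering i z hz hz0, ← Submodule.span_eq ((C 1).map (LieAlgebra.ad F L z))]
  congr 1
  ext w
  simp only [SetLike.mem_coe, Submodule.mem_map, LieAlgebra.ad_apply, Set.mem_ofPred_eq]
  exact ⟨fun ⟨a, ha, h⟩ => ⟨a, ha, h.symm⟩, fun ⟨a, ha, h⟩ => ⟨a, ha, h.symm⟩⟩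

theorem fg_one (hthin : IsThinGraded F L C) : (C 1).FG :=
  (Submodule.fg_iff_finiteDimensional _).mpr
    (Module.finite_of_finrank_pos (by rw [hthin.dim_one]; norm_num))

theorem fg_succ (hthin : IsThinGraded F L C) {i : ℕ} (hi : C i ≠ ⊥) : (C (i + 1)).FG := by
  obtain ⟨z, hz, hz0⟩ := (C i).ne_bot_iff.mp hi
  rw [← hthin.map_ad_eq hz hz0]
  exact hthin.fg_one.map _

theorem iSup_Ico_eq_top_of_eq_bot (hthin : IsThinGraded F L C) {j : ℕ} (hj : 1 < j)
    (hjbot : C j = ⊥) : ⨆ m ∈ Finset.Ico 1 j, C m = ⊤ := by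
  set M := ⨆ m ∈ Finset.Ico 1 j, C m
  have hle : ∀ m ∈ Finset.Ico 1 j, C m ≤ M := fun m hm =>
    le_biSup (fun m => C m) hm
  refine LieSubalgebra.submodule_eq_top_of_lie_mem hthin.generates
    (hle 1 (Finset.mem_Ico.mpr ⟨le_rfl, hj⟩)) fun a ha x hx => ?_
  have hmap : M.map (LieAlgebra.ad F L a) ≤ M := by
    simp only [M, Submodule.map_iSup]
    refine iSup₂_le fun m hm => ?_
    rintro _ ⟨x, hx, rfl⟩
    have hbr : ⁅a, x⁆ ∈ C (1 + m) := hthin.bracket_mem 1 m a ha x hx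
    obtain ⟨hm1, hmj⟩ := Finset.mem_Ico.mp hm
    rcases Nat.lt_or_ge (1 + m) j with hlt | hge
    · exact hle (1 + m) (Finset.mem_Ico.mpr ⟨by omega, hlt⟩) hbr
    · rw [show 1 + m = j by omega, hjbot, Submodule.mem_bot] at hbr
      simp [hbr]
  exact hmap (Submodule.mem_map_of_mem hx)

theorem ne_bot (hthin : IsThinGraded F L C) {n : ℕ} (hn : 1 ≤ n) : C n ≠ ⊥ := by
  classical
  intro hnbot
  have hex : ∃ j, 1 ≤ j ∧ C j = ⊥ := ⟨n, hn, hnbot⟩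
  obtain ⟨hj1, hjbot⟩ := Nat.find_spec hex
  set j := Nat.find hex
  have hj : 1 < j := by
    refine lt_of_le_of_ne hj1 fun h => ?_
    have hdim := hthin.dim_one
    rw [h, hjbot, finrank_bot] at hdim
    exact absurd hdim (by norm_num)
  have hfg : ∀ m ∈ Finset.Ico 1 j, (C m).FG := by
    intro m hm
    obtain ⟨hm1, hmj⟩ := Finset.mem_Ico.mp hm
    obtain rfl | hm2 := hm1.eq_or_lt
    · exact hthin.fg_one
    · obtain ⟨k, rfl⟩ := Nat.exists_eq_add_of_lt hm2
      exact hthin.fg_succ fun hk => Nat.find_min hex (by omega) ⟨by omega, hk⟩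
  apply hthin.infinite_dim
  rw [Module.finite_def, ← hthin.iSup_Ico_eq_top_of_eq_bot hj hjbot]
  exact Submodule.fg_biSup _ _ hfg

theorem exists_centralized_succ_or_succ_succ (hthin : IsThinGraded F L C) {y : L}
    (hy1 : y ∈ C 1) (hyc : ∀ v ∈ C 2, ⁅y, v⁆ = 0) {i : ℕ} {u : L} (hu : u ∈ C i)
    (hu0 : u ≠ 0) (huy : ⁅u, y⁆ = 0) :
    (∃ v ∈ C (i + 1), v ≠ 0 ∧ ⁅v, y⁆ = 0) ∨ (∃ v ∈ C (i + 1 + 1), v ≠ 0 ∧ ⁅v, y⁆ = 0) := by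
  obtain ⟨v, hv, hv0⟩ := (C (i + 1)).ne_bot_iff.mp (hthin.ne_bot (Nat.le_add_left 1 i))
  obtain ⟨a, ha, rfl⟩ : v ∈ (C 1).map (LieAlgebra.ad F L u) := hthin.map_ad_eq hu hu0 ▸ hv
  rw [LieAlgebra.ad_apply] at hv hv0
  by_cases hvy : ⁅⁅u, a⁆, y⁆ = 0
  · exact Or.inl ⟨_, hv, hv0, hvy⟩
  refine Or.inr ⟨_, hthin.bracket_mem _ 1 _ hv y hy1, hvy, ?_⟩
  have hayy : ⁅⁅a, y⁆, y⁆ = 0 := by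
    rw [← lie_skew, hyc _ (hthin.bracket_mem 1 1 a ha y hy1), neg_zero]
  have huay : ⁅⁅u, a⁆, y⁆ = ⁅u, ⁅a, y⁆⁆ := by rw [lie_lie, huy, lie_zero, sub_zero]
  rw [huay, lie_lie, huy, hayy, lie_zero, lie_zero, sub_zero]

end IsThinGraded

theorem thin_consecutive_centralized_general {F L : Type*} [Field F] [LieRing L] [LieAlgebra F L]
    {C : ℕ → Submodule F L} (hthin : IsThinGraded F L C)
    {y : L} (hy1 : y ∈ C 1) (hy0 : y ≠ 0) (hyc : ∀ v ∈ C 2, ⁅y, v⁆ = 0)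
    {i : ℕ} (hi : 1 ≤ i) :
    (∃ u ∈ C i, u ≠ 0 ∧ ⁅u, y⁆ = 0) ∨ (∃ u ∈ C (i + 1), u ≠ 0 ∧ ⁅u, y⁆ = 0) := by
  induction i, hi using Nat.le_induction with
  | base => exact Or.inl ⟨y, hy1, hy0, lie_self y⟩
  | succ i _ ih =>
    rcases ih with ⟨u, hu, hu0, huy⟩ | h
    · exact hthin.exists_centralized_succ_or_succ_succ hy1 hyc hu hu0 huy
    · exact Or.inl h

/-- Of any two consecutive homogeneous components, at least one contains a
nonzero element centralized by `y`. -/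
theorem thin_consecutive_centralized {F L : Type*} [Field F] [LieRing L] [LieAlgebra F L]
    (h2 : (2 : F) ≠ 0)
    {C : ℕ → Submodule F L} (hthin : IsThinGraded F L C)
    (h3 : Module.finrank F (C 3) = 1)
    {y : L} (hy1 : y ∈ C 1) (hy0 : y ≠ 0) (hyc : ∀ v ∈ C 2, ⁅y, v⁆ = 0)
    {i : ℕ} (hi : 1 ≤ i) :
    (∃ u ∈ C i, u ≠ 0 ∧ ⁅u, y⁆ = 0) ∨ (∃ u ∈ C (i + 1), u ≠ 0 ∧ ⁅u, y⁆ = 0) :=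
  thin_consecutive_centralized_general hthin hy1 hy0 hyc hi
end

section
/- Let L be a thin Lie algebra over a field of characteristic ≠ 2 with dim(L_3) = 1, and let y span C_{L_1}(L_2). If [L_j y y] ≠ 0 for some j, then dim(L_j) = 2. -/
open Module

/-! Each `L_{k+2}` is `[z, L_1]` for any nonzero `z ∈ L_{k+1}`, so every component has
dimension at most 2, and it suffices to show that `(ad y)²` kills every component `L_n` of
dimension at most 1. We induct on `n`. If some nonzero `p ∈ L_{n-1}` commutes with `y`, then
`L_n = [p, L_1]`, and `(ad y)²` commutes with `ad p` and kills `L_1` because `[y, L_2] = 0`.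
Otherwise `ad y` embeds `L_{n-1}` into the line `L_n`, hence onto it, and the claim descends
from `L_{n-1}`. Generation by `L_1` enters only to know that `L_{n-1} = 0` forces `L_n = 0`. -/

open LieAlgebra

namespace Submodule

variable {R L : Type*} [CommRing R] [LieRing L] [LieAlgebra R L]

/-- The span of the left-normed brackets `⁅⋯⁅v₀, v₁⁆, ⋯, vₙ⁆` with all `vᵢ ∈ V`
(so `n + 1` factors). -/
def leftNormed (V : Submodule R L) : ℕ → Submodule R L
  | 0 => V
  | n + 1 => map₂ (ad R L : L →ₗ[R] Module.End R L) (leftNormed V n) V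

variable (V : Submodule R L)

theorem lie_mem_leftNormed_succ {n : ℕ} {u a : L} (hu : u ∈ V.leftNormed n) (ha : a ∈ V) :
    ⁅u, a⁆ ∈ V.leftNormed (n + 1) :=
  apply_mem_map₂ _ hu ha

theorem lie_mem_leftNormed (n : ℕ) :
    ∀ {m : ℕ} {u : L}, u ∈ V.leftNormed m → ∀ w ∈ V.leftNormed n,
      ⁅u, w⁆ ∈ V.leftNormed (m + n + 1) := by
  induction n with
  | zero => exact fun hu w hw => V.lie_mem_leftNormed_succ hu hw
  | succ n ih =>
    intro m u hu w hw
    refine (map₂_le.2 fun v hv a ha => ?_ :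
      V.leftNormed (n + 1) ≤ (V.leftNormed (m + (n + 1) + 1)).comap (ad R L u)) hw
    have hua : ⁅⁅u, a⁆, v⁆ ∈ V.leftNormed (m + 1 + n + 1) :=
      ih (V.lie_mem_leftNormed_succ hu ha) v hv
    rw [show m + 1 + n + 1 = m + (n + 1) + 1 by omega] at hua
    change ⁅u, ⁅v, a⁆⁆ ∈ V.leftNormed (m + (n + 1) + 1)
    rw [leibniz_lie, ← lie_skew v ⁅u, a⁆]
    exact add_mem (V.lie_mem_leftNormed_succ (ih hu v hv) ha) (neg_mem hua)

theorem lieSpan_le_iSup_leftNormed :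
    (LieSubalgebra.lieSpan R L (V : Set L)).toSubmodule ≤ ⨆ n, V.leftNormed n := by
  let K : LieSubalgebra R L :=
    { toSubmodule := ⨆ n, V.leftNormed n
      lie_mem' := fun {x z} hx hz => by
        have : map₂ (ad R L : L →ₗ[R] Module.End R L) (⨆ m, V.leftNormed m) (⨆ n, V.leftNormed n)
            ≤ ⨆ n, V.leftNormed n := by
          rw [map₂_iSup_left]
          refine iSup_le fun m => ?_
          rw [map₂_iSup_right]
          exact iSup_le fun n => map₂_le.2 fun u hu w hw =>
            mem_iSup_of_mem _ (V.lie_mem_leftNormed n hu w hw)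
        exact this (apply_mem_map₂ _ hx hz) }
  exact LieSubalgebra.lieSpan_le (K := K) |>.2 fun v hv => mem_iSup_of_mem 0 hv

end Submodule

theorem LieAlgebra.ad_sq_apply {R L : Type*} [CommRing R] [LieRing L] [LieAlgebra R L]
    (x y : L) : (ad R L y ^ 2) x = ⁅⁅x, y⁆, y⁆ := by
  rw [pow_two, Module.End.mul_apply, ad_apply, ad_apply, ← lie_skew y x, lie_neg, lie_skew]

theorem LieAlgebra.commute_ad_of_lie_eq_zero {R L : Type*} [CommRing R] [LieRing L]
    [LieAlgebra R L] {x y : L} (h : ⁅x, y⁆ = 0) : Commute (ad R L x) (ad R L y) :=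
  LinearMap.ext fun z => by simp [leibniz_lie x y z, h]

theorem leftNormed_le_of_lie_mem {R L : Type*} [CommRing R] [LieRing L] [LieAlgebra R L]
    {C : ℕ → Submodule R L} (hC : ∀ i j, ∀ u ∈ C i, ∀ v ∈ C j, ⁅u, v⁆ ∈ C (i + j)) :
    ∀ n, (C 1).leftNormed n ≤ C (n + 1)
  | 0 => le_rfl
  | n + 1 => Submodule.map₂_le.2 fun u hu a ha =>
      hC (n + 1) 1 u (leftNormed_le_of_lie_mem hC n hu) a ha

namespace IsThinGraded

variable {F L : Type*} [Field F] [LieRing L] [LieAlgebra F L] {C : ℕ → Submodule F L}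
  (hthin : IsThinGraded F L C)
include hthin

theorem eq_bot_succ {k : ℕ} (hk : C (k + 1) = ⊥) : C (k + 2) = ⊥ := by
  have hlow : (C 1).leftNormed (k + 1) = ⊥ := by
    have : (C 1).leftNormed k = ⊥ :=
      le_bot_iff.1 (hk ▸ leftNormed_le_of_lie_mem hthin.bracket_mem k)
    rw [Submodule.leftNormed, this, Submodule.map₂_bot_left]
  have htop : ⊤ ≤ ⨆ (i) (_ : i ≠ k + 2), C i := by
    rw [← LieSubalgebra.top_toSubmodule, ← hthin.generates]
    refine (Submodule.lieSpan_le_iSup_leftNormed _).trans (iSup_le fun n => ?_)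
    rcases eq_or_ne n (k + 1) with rfl | hn
    · rw [hlow]; exact bot_le
    · exact (leftNormed_le_of_lie_mem hthin.bracket_mem n).trans
        (le_iSup₂_of_le (n + 1) (by omega) le_rfl)
  exact disjoint_top.1 ((hthin.internal.submodule_iSupIndep (k + 2)).mono_right htop)

theorem eq_map_ad {i : ℕ} {z : L} (hz : z ∈ C i) (hz0 : z ≠ 0) :
    C (i + 1) = (C 1).map (ad F L z) := by
  rw [← hthin.covering i z hz hz0, ← Submodule.span_eq ((C 1).map (ad F L z)),
    Submodule.map_coe]
  congr 1
  ext w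
  simp [eq_comm]

theorem exists_le_map_ad (k : ℕ) : ∃ z, C (k + 2) ≤ (C 1).map (ad F L z) := by
  rcases eq_or_ne (C (k + 1)) ⊥ with hk | hk
  · exact ⟨0, (hthin.eq_bot_succ hk).le.trans bot_le⟩
  · obtain ⟨z, hz, hz0⟩ := (Submodule.ne_bot_iff _).1 hk
    exact ⟨z, (hthin.eq_map_ad hz hz0).le⟩

theorem finiteDimensional : ∀ n, FiniteDimensional F (C n)
  | 0 => by rw [hthin.zero_bot]; infer_instance
  | 1 => Module.finite_of_finrank_eq_succ hthin.dim_one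
  | k + 2 => by
    have : FiniteDimensional F (C 1) := Module.finite_of_finrank_eq_succ hthin.dim_one
    obtain ⟨z, hz⟩ := hthin.exists_le_map_ad k
    exact Submodule.finiteDimensional_of_le hz

theorem finrank_le_two : ∀ n, finrank F (C n) ≤ 2
  | 0 => by rw [hthin.zero_bot, finrank_bot]; omega
  | 1 => hthin.dim_one.le
  | k + 2 => by
    have := hthin.finiteDimensional 1
    obtain ⟨z, hz⟩ := hthin.exists_le_map_ad k
    calc finrank F (C (k + 2)) ≤ finrank F ((C 1).map (ad F L z)) := Submodule.finrank_mono hz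
      _ ≤ finrank F (C 1) := Submodule.finrank_map_le _ _
      _ = 2 := hthin.dim_one

variable {y : L} (hy1 : y ∈ C 1) (hyc : ∀ v ∈ C 2, ⁅y, v⁆ = 0)
include hy1 hyc

theorem le_ker_ad_sq_of_lie_eq_zero {i : ℕ} {p : L} (hp : p ∈ C i) (hp0 : p ≠ 0)
    (hyp : ⁅y, p⁆ = 0) : C (i + 1) ≤ LinearMap.ker (ad F L y ^ 2) := by
  rw [hthin.eq_map_ad hp hp0, Submodule.map_le_iff_le_comap]
  intro a ha
  have hya : ⁅y, a⁆ ∈ C 2 := hthin.bracket_mem 1 1 y hy1 a ha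
  rw [Submodule.mem_comap, LinearMap.mem_ker, ← Module.End.mul_apply,
    ((commute_ad_of_lie_eq_zero hyp).pow_left 2).eq, Module.End.mul_apply, pow_two,
    Module.End.mul_apply]
  simp only [ad_apply, hyc _ hya, lie_zero]

theorem le_ker_ad_sq_succ {k : ℕ} (hk : finrank F (C (k + 2)) ≤ 1)
    (ih : finrank F (C (k + 1)) ≤ 1 → C (k + 1) ≤ LinearMap.ker (ad F L y ^ 2)) :
    C (k + 2) ≤ LinearMap.ker (ad F L y ^ 2) := by
  by_cases hdisj : Disjoint (C (k + 1)) (LinearMap.ker (ad F L y))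
  swap
  · rw [LinearMap.disjoint_ker] at hdisj
    push Not at hdisj
    obtain ⟨p, hp, hyp, hp0⟩ := hdisj
    exact hthin.le_ker_ad_sq_of_lie_eq_zero hy1 hyc hp hp0 hyp
  rcases eq_or_ne (C (k + 1)) ⊥ with hbot | hbot
  · rw [hthin.eq_bot_succ hbot]; exact bot_le
  have := hthin.finiteDimensional (k + 1)
  have := hthin.finiteDimensional (k + 2)
  let φ : C (k + 1) →ₗ[F] C (k + 2) :=
    (ad F L y).restrict fun p hp => by
      rw [ad_apply, ← lie_skew]
      exact neg_mem (hthin.bracket_mem (k + 1) 1 p hp y hy1)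
  have hinj : Function.Injective φ := (LinearMap.injective_restrict_iff _).2 hdisj
  have hrank : finrank F (C (k + 1)) = finrank F (C (k + 2)) := by
    have := LinearMap.finrank_le_finrank_of_injective hinj
    have := Submodule.one_le_finrank_iff.2 hbot
    omega
  have hsurj : Function.Surjective φ :=
    (LinearMap.injective_iff_surjective_of_finrank_eq_finrank hrank).1 hinj
  intro z hz
  obtain ⟨w, hw⟩ := hsurj ⟨z, hz⟩
  have hwz : ad F L y w = z := congrArg Subtype.val hw
  rw [LinearMap.mem_ker, ← hwz, ← Module.End.mul_apply, ← pow_succ, pow_succ',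
    Module.End.mul_apply, ih (hrank ▸ hk) w.2, map_zero]

theorem le_ker_ad_sq_of_finrank_le_one :
    ∀ n, finrank F (C n) ≤ 1 → C n ≤ LinearMap.ker (ad F L y ^ 2)
  | 0, _ => by rw [hthin.zero_bot]; exact bot_le
  | 1, h => by rw [hthin.dim_one] at h; omega
  | k + 2, h => hthin.le_ker_ad_sq_succ hy1 hyc h
      (le_ker_ad_sq_of_finrank_le_one (k + 1))

end IsThinGraded

theorem thin_diamond_of_yy_ne_zero_general {F L : Type*} [Field F] [LieRing L] [LieAlgebra F L]
    {C : ℕ → Submodule F L} (hthin : IsThinGraded F L C)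
    {y : L} (hy1 : y ∈ C 1) (hyc : ∀ v ∈ C 2, ⁅y, v⁆ = 0)
    {j : ℕ} (hj : ∃ u ∈ C j, ⁅⁅u, y⁆, y⁆ ≠ 0) :
    Module.finrank F (C j) = 2 := by
  obtain ⟨u, hu, huy⟩ := hj
  have := hthin.finrank_le_two j
  by_contra hne
  have hker := hthin.le_ker_ad_sq_of_finrank_le_one hy1 hyc j (by omega) hu
  exact huy (ad_sq_apply (R := F) u y ▸ hker)

/-- If `[L_j y y] ≠ 0` then `L_j` is a diamond. -/
theorem thin_diamond_of_yy_ne_zero {F L : Type*} [Field F] [LieRing L] [LieAlgebra F L]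
    (h2 : (2 : F) ≠ 0)
    {C : ℕ → Submodule F L} (hthin : IsThinGraded F L C)
    (h3 : Module.finrank F (C 3) = 1)
    {y : L} (hy1 : y ∈ C 1) (hy0 : y ≠ 0) (hyc : ∀ v ∈ C 2, ⁅y, v⁆ = 0)
    {j : ℕ} (hj : ∃ u ∈ C j, ⁅⁅u, y⁆, y⁆ ≠ 0) :
    Module.finrank F (C j) = 2 :=
  thin_diamond_of_yy_ne_zero_general hthin hy1 hyc hj
end

section
/- Let L be a thin Lie algebra over a field of characteristic ≠ 2 with dim(L_3) = 1, and let y span C_{L_1}(L_2). If L_j and L_{j+2} are both diamonds (two-dimensional), then [L_j y y] ≠ 0. -/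
/-!
For nonzero `z ∈ Lᵢ` the covering property makes `a ↦ [z, a]` a surjection `L₁ → L_{i+1}`, so
`dim L_{i+1} + dim ker = 2`. As `L_{j+2}` is a diamond, `[z, y] ≠ 0` for every nonzero
`z ∈ L_{j+1}`, and it remains to find `u ∈ L_j` with `[u, y] ≠ 0`. If `y` centralised the diamond
`L_j`, then `L_{j+1}` would be a line (nonzero because `L` is generated by `L₁`), so the kernel of
every nonzero `u ∈ L_j` would be exactly `F y`. Choosing `x ∈ L₁` with `[z, x] ≠ 0` for some
`z ∈ L_j` (so `x ∉ F y`), the map `u ↦ [u, x]` from the plane `L_j` to the line `L_{j+1}` kills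
some nonzero `u`, whose kernel then contains `x`: a contradiction.
-/

open Module

section Bracket

variable (F L : Type*) [Field F] [LieRing L] [LieAlgebra F L]

def lieBracketₗ : L →ₗ[F] L →ₗ[F] L :=
  LinearMap.mk₂ F (⁅·, ·⁆) add_lie smul_lie lie_add lie_smul

variable {F L}

@[simp]
theorem lieBracketₗ_apply (u v : L) : lieBracketₗ F L u v = ⁅u, v⁆ :=
  rfl

end Bracket

namespace Submodule

variable {F L : Type*} [Field F] [LieRing L] [LieAlgebra F L]

/-- Span of the right-normed brackets `⁅⁅⁅v₁, v₂⁆, …⁆, vₙ⁆` with all `vᵢ ∈ V`. -/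
def rightNormedSpan (V : Submodule F L) : ℕ → Submodule F L
  | 0 => ⊥
  | 1 => V
  | n + 2 => map₂ (lieBracketₗ F L) (rightNormedSpan V (n + 1)) V

variable {V : Submodule F L}

theorem lie_mem_rightNormedSpan_succ {m : ℕ} {u a : L} (hu : u ∈ V.rightNormedSpan m)
    (ha : a ∈ V) : ⁅u, a⁆ ∈ V.rightNormedSpan (m + 1) := by
  cases m with
  | zero =>
    rw [rightNormedSpan, mem_bot] at hu
    simp [hu]
  | succ m => exact apply_mem_map₂ _ hu ha

theorem lie_mem_rightNormedSpan_add {m k : ℕ} {u v : L} (hu : u ∈ V.rightNormedSpan m)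
    (hv : v ∈ V.rightNormedSpan k) : ⁅u, v⁆ ∈ V.rightNormedSpan (m + k) := by
  induction k generalizing m u v with
  | zero =>
    rw [rightNormedSpan, mem_bot] at hv
    simp [hv]
  | succ k ih =>
    cases k with
    | zero => exact lie_mem_rightNormedSpan_succ hu hv
    | succ k =>
      suffices V.rightNormedSpan (k + 2) ≤ (V.rightNormedSpan (m + (k + 2))).comap
          (lieBracketₗ F L u) from this hv
      refine map₂_le.mpr fun p hp a ha => ?_
      have hupa : ⁅⁅u, p⁆, a⁆ ∈ V.rightNormedSpan (m + (k + 2)) :=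
        lie_mem_rightNormedSpan_succ (ih hu hp) ha
      have huap : ⁅⁅u, a⁆, p⁆ ∈ V.rightNormedSpan (m + 1 + (k + 1)) :=
        ih (lie_mem_rightNormedSpan_succ hu ha) hp
      rw [show m + 1 + (k + 1) = m + (k + 2) by omega] at huap
      show ⁅u, ⁅p, a⁆⁆ ∈ V.rightNormedSpan (m + (k + 2))
      rw [leibniz_lie u p a, ← lie_skew p ⁅u, a⁆]
      exact add_mem hupa (neg_mem huap)

theorem lieSpan_le_iSup_rightNormedSpan :
    (LieSubalgebra.lieSpan F L (V : Set L)).toSubmodule ≤ ⨆ n, V.rightNormedSpan n := by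
  have hclosed : map₂ (lieBracketₗ F L) (⨆ n, V.rightNormedSpan n)
      (⨆ n, V.rightNormedSpan n) ≤ ⨆ n, V.rightNormedSpan n := by
    simp only [map₂_iSup_left, map₂_iSup_right, iSup_le_iff, map₂_le]
    exact fun _ _ _ hu _ hv => mem_iSup_of_mem _ (lie_mem_rightNormedSpan_add hu hv)
  let K : LieSubalgebra F L :=
    { toSubmodule := ⨆ n, V.rightNormedSpan n
      lie_mem' := fun hu hv => hclosed (apply_mem_map₂ _ hu hv) }
  have hVK : (V : Set L) ⊆ K := fun _ ha => mem_iSup_of_mem 1 ha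
  exact fun _ hx => LieSubalgebra.lieSpan_le.mpr hVK hx

end Submodule

theorem lieGrade_add_two_eq_bot_of_eq_bot {F L : Type*} [Field F] [LieRing L] [LieAlgebra F L]
    {C : ℕ → Submodule F L} (hind : iSupIndep C)
    (hmul : ∀ i j : ℕ, ∀ u ∈ C i, ∀ v ∈ C j, ⁅u, v⁆ ∈ C (i + j))
    (hgen : LieSubalgebra.lieSpan F L ((C 1 : Submodule F L) : Set L) = ⊤) {n : ℕ}
    (h : C (n + 1) = ⊥) : C (n + 2) = ⊥ := by
  have hle : ∀ m, (C 1).rightNormedSpan m ≤ C m := by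
    intro m
    induction m with
    | zero => exact bot_le
    | succ m ih =>
      cases m with
      | zero => exact le_rfl
      | succ m => exact Submodule.map₂_le.mpr fun u hu a ha => hmul _ 1 u (ih hu) a ha
  have hvanish : (C 1).rightNormedSpan (n + 2) = ⊥ := by
    have : (C 1).rightNormedSpan (n + 1) = ⊥ := eq_bot_iff.mpr (h ▸ hle (n + 1))
    rw [Submodule.rightNormedSpan, this, Submodule.map₂_bot_left]
  have htop : ⊤ ≤ ⨆ m, ⨆ (_ : m ≠ n + 2), C m := by
    refine (hgen ▸ Submodule.lieSpan_le_iSup_rightNormedSpan).trans (iSup_le fun m => ?_)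
    by_cases hm : m = n + 2
    · subst hm
      exact hvanish.trans_le bot_le
    · exact (hle m).trans (le_iSup₂_of_le m hm le_rfl)
  simpa using (hind (n + 2)).mono_right htop

namespace IsThinGraded

variable {F L : Type*} [Field F] [LieRing L] [LieAlgebra F L] {C : ℕ → Submodule F L}
  {i : ℕ} {z : L}

theorem range_lieBracketₗ_domRestrict (hthin : IsThinGraded F L C) (hz : z ∈ C i)
    (hz0 : z ≠ 0) : LinearMap.range ((lieBracketₗ F L z).domRestrict (C 1)) = C (i + 1) := by
  rw [LinearMap.range_domRestrict, ← hthin.covering i z hz hz0, ← Submodule.span_eq (C 1),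
    ← Submodule.span_image, Submodule.span_eq]
  congr 1
  ext w
  simp [eq_comm]

theorem finiteDimensional_one (hthin : IsThinGraded F L C) : FiniteDimensional F (C 1) :=
  .of_finrank_pos (by rw [hthin.dim_one]; norm_num)

theorem finrank_succ_add_finrank_ker (hthin : IsThinGraded F L C) (hz : z ∈ C i)
    (hz0 : z ≠ 0) :
    finrank F (C (i + 1)) + finrank F (LinearMap.ker ((lieBracketₗ F L z).domRestrict (C 1))) =
      2 := by
  have := hthin.finiteDimensional_one
  rw [← hthin.range_lieBracketₗ_domRestrict hz hz0, LinearMap.finrank_range_add_finrank_ker,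
    hthin.dim_one]

theorem finrank_succ_le_one_of_lie_eq_zero (hthin : IsThinGraded F L C) (hz : z ∈ C i)
    (hz0 : z ≠ 0) {a : L} (ha : a ∈ C 1) (ha0 : a ≠ 0) (hza : ⁅z, a⁆ = 0) :
    finrank F (C (i + 1)) ≤ 1 := by
  have hker : LinearMap.ker ((lieBracketₗ F L z).domRestrict (C 1)) ≠ ⊥ := fun h => by
    have : (⟨a, ha⟩ : C 1) ∈ LinearMap.ker ((lieBracketₗ F L z).domRestrict (C 1)) := hza
    rw [h, Submodule.mem_bot] at this
    exact ha0 (congrArg Subtype.val this)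
  have := hthin.finiteDimensional_one
  have := hthin.finrank_succ_add_finrank_ker hz hz0
  have := Submodule.one_le_finrank_iff.mpr hker
  omega

theorem exists_smul_eq_of_lie_eq_zero (hthin : IsThinGraded F L C) (hz : z ∈ C i)
    (hz0 : z ≠ 0) (hi : finrank F (C (i + 1)) = 1) {y a : L} (hy : y ∈ C 1) (hy0 : y ≠ 0)
    (hzy : ⁅z, y⁆ = 0) (ha : a ∈ C 1) (hza : ⁅z, a⁆ = 0) : ∃ c : F, c • y = a := by
  have hsum := hthin.finrank_succ_add_finrank_ker hz hz0
  set K := LinearMap.ker ((lieBracketₗ F L z).domRestrict (C 1))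
  have hK : finrank F K = 1 := by omega
  have hy' : (⟨⟨y, hy⟩, hzy⟩ : K) ≠ 0 := fun h => hy0 (congrArg (fun v : K => (v : L)) h)
  obtain ⟨c, hc⟩ := (finrank_eq_one_iff_of_nonzero' _ hy').mp hK ⟨⟨a, ha⟩, hza⟩
  exact ⟨c, congrArg (fun v : K => (v : L)) hc⟩

theorem exists_lie_ne_zero_of_finrank_eq_two (hthin : IsThinGraded F L C) {j : ℕ}
    (hj : finrank F (C j) = 2) (hj1 : C (j + 1) ≠ ⊥) {y : L} (hy : y ∈ C 1) (hy0 : y ≠ 0) :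
    ∃ u ∈ C j, ⁅u, y⁆ ≠ 0 := by
  by_contra! hno
  have : FiniteDimensional F (C j) := .of_finrank_pos (by rw [hj]; norm_num)
  obtain ⟨z, hz, hz0⟩ := Submodule.exists_mem_ne_zero_of_ne_bot fun h : C j = ⊥ => by
    rw [h, finrank_bot] at hj
    exact absurd hj (by norm_num)
  have hrange := hthin.range_lieBracketₗ_domRestrict hz hz0
  have := hthin.finiteDimensional_one
  have : FiniteDimensional F (C (j + 1)) := hrange ▸ LinearMap.finiteDimensional_range _
  have hrank : finrank F (C (j + 1)) = 1 :=
    le_antisymm (hthin.finrank_succ_le_one_of_lie_eq_zero hz hz0 hy hy0 (hno z hz))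
      (Submodule.one_le_finrank_iff.mpr hj1)
  obtain ⟨x, hx, hzx⟩ : ∃ x ∈ C 1, ⁅z, x⁆ ≠ 0 := by
    obtain ⟨w, hw, hw0⟩ := Submodule.exists_mem_ne_zero_of_ne_bot hj1
    obtain ⟨⟨x, hx⟩, rfl⟩ := hrange ▸ hw
    exact ⟨x, hx, hw0⟩
  obtain ⟨u, hu, hu0, hux⟩ : ∃ u ∈ C j, u ≠ 0 ∧ ⁅u, x⁆ = 0 := by
    let θ : C j →ₗ[F] C (j + 1) := (((lieBracketₗ F L).flip x).domRestrict (C j)).codRestrict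
      (C (j + 1)) fun u => hthin.bracket_mem j 1 _ u.2 x hx
    obtain ⟨u, hu, hu0⟩ := Submodule.exists_mem_ne_zero_of_ne_bot
      (θ.ker_ne_bot_of_finrank_lt (by omega))
    exact ⟨u, u.2, fun h => hu0 (Subtype.ext h), congrArg Subtype.val hu⟩
  obtain ⟨c, rfl⟩ := hthin.exists_smul_eq_of_lie_eq_zero hu hu0 hrank hy hy0 (hno u hu) hx hux
  exact hzx (by rw [lie_smul, hno z hz, smul_zero])

end IsThinGraded

theorem thin_diamonds_distance_two_general {F L : Type*} [Field F] [LieRing L] [LieAlgebra F L]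
    {C : ℕ → Submodule F L} (hthin : IsThinGraded F L C)
    {y : L} (hy1 : y ∈ C 1) (hy0 : y ≠ 0)
    {j : ℕ} (hdj : Module.finrank F (C j) = 2)
    (hdj2 : Module.finrank F (C (j + 2)) = 2) :
    ∃ u ∈ C j, ⁅⁅u, y⁆, y⁆ ≠ 0 := by
  have hj1 : C (j + 1) ≠ ⊥ := fun h => by
    rw [lieGrade_add_two_eq_bot_of_eq_bot hthin.internal.submodule_iSupIndep hthin.bracket_mem
      hthin.generates h, finrank_bot] at hdj2
    exact absurd hdj2 (by norm_num)
  obtain ⟨u, hu, huy⟩ := hthin.exists_lie_ne_zero_of_finrank_eq_two hdj hj1 hy1 hy0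
  refine ⟨u, hu, fun h => ?_⟩
  have : finrank F (C (j + 2)) ≤ 1 :=
    hthin.finrank_succ_le_one_of_lie_eq_zero (hthin.bracket_mem j 1 u hu y hy1) huy hy1 hy0 h
  omega

/-- If `L_j` and `L_{j+2}` are both diamonds then `[L_j y y] ≠ 0`. -/
theorem thin_diamonds_distance_two {F L : Type*} [Field F] [LieRing L] [LieAlgebra F L]
    (h2 : (2 : F) ≠ 0)
    {C : ℕ → Submodule F L} (hthin : IsThinGraded F L C)
    (h3 : Module.finrank F (C 3) = 1)
    {y : L} (hy1 : y ∈ C 1) (hy0 : y ≠ 0) (hyc : ∀ v ∈ C 2, ⁅y, v⁆ = 0)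
    {j : ℕ} (hj : 1 ≤ j) (hdj : Module.finrank F (C j) = 2)
    (hdj2 : Module.finrank F (C (j + 2)) = 2) :
    ∃ u ∈ C j, ⁅⁅u, y⁆, y⁆ ≠ 0 :=
  thin_diamonds_distance_two_general hthin hy1 hy0 hdj hdj2
end

section
/- Let L be a thin Lie algebra over a field of odd characteristic with dim(L_3) = 1, let y span C_{L_1}(L_2). Suppose [L y y] ≠ 0 and let j be minimal with [L_j y y] ≠ 0. Then L_{j-2} and L_{j-3} are one-dimensional and both are centralized by y (i.e. [L_{j-2}, y] = 0 and [L_{j-3}, y] = 0). -/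
/-!
Write `L₁ = span {x, y}`. If `0 ≠ z ∈ Lᵢ` and `[z, y] = 0`, then `L_{i+1} = [z, L₁]`, and every
`u ∈ L_{i+1}` has `[u y y] = 0`: `ad y` is a derivation killing `z`, and `[a y y] = 0` for
`a ∈ L₁` because `y` centralizes `L₂`. As `[L_j y y] ≠ 0`, `ad y` is thus injective on `L_{j-1}`,
and minimality of `j` makes `y` centralize `L_{j-2}`. For `w ∈ L_{j-3}` the Jacobi identity then
gives `2 [w y x y] = 0`, so in odd characteristic `[w y x] = 0`; hence `[w y] ∈ L_{j-2}` commutes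
with all of `L₁` and vanishes by covering. Once `y` centralizes `L_{j-3}`, covering gives
`L_{j-2} = span {[w x]}` for any nonzero `w ∈ L_{j-3}`, and `ad x : L_{j-3} → L_{j-2}` is
injective, so both are one-dimensional. Throughout, generation by `L₁` is what guarantees that
`L_i ≠ 0` for `1 ≤ i ≤ j`.
-/

open Module

theorem iSupIndep.eq_of_le_of_iSup_eq_top {R M ι : Type*} [Ring R] [AddCommGroup M]
    [Module R M] {C D : ι → Submodule R M} (hC : iSupIndep C) (hle : ∀ i, D i ≤ C i)
    (htop : ⨆ i, D i = ⊤) (i : ι) : D i = C i := by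
  refine le_antisymm (hle i) fun x hx => ?_
  have hxD : x ∈ D i ⊔ ⨆ (j) (_ : j ≠ i), D j := by
    rw [← iSup_split_single, htop]; exact Submodule.mem_top
  obtain ⟨d, hd, e, he, rfl⟩ := Submodule.mem_sup.mp hxD
  have he' : e ∈ ⨆ (j) (_ : j ≠ i), C j := iSup₂_mono (fun j _ => hle j) he
  have he0 : e = 0 := Submodule.disjoint_def.mp (hC i) e
    (by simpa using sub_mem hx (hle i hd)) he'
  simpa [he0] using hd

theorem exists_span_pair_eq {K M : Type*} [Field K] [AddCommGroup M] [Module K M]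
    {V : Submodule K M} (hV : finrank K V = 2) {y : M} (hy : y ∈ V) (hy0 : y ≠ 0) :
    ∃ x, Submodule.span K {x, y} = V := by
  have : FiniteDimensional K V := Module.finite_of_finrank_eq_succ hV
  obtain ⟨x, hx⟩ := exists_linearIndependent_pair_of_one_lt_finrank (R := K) (M := V)
    (by omega) (x := ⟨y, hy⟩) (by simpa using hy0)
  have hind : LinearIndependent K ![y, (x : M)] := by
    have := hx.map' V.subtype V.ker_subtype
    rwa [show V.subtype ∘ ![⟨y, hy⟩, x] = ![y, (x : M)] by ext i; fin_cases i <;> rfl] at this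
  refine ⟨x, Submodule.eq_of_le_of_finrank_eq ?_ ?_⟩
  · simpa [Submodule.span_le, Set.insert_subset_iff] using hy
  · rw [hV, Set.pair_comm, ← Matrix.range_cons_cons_empty, finrank_span_eq_card hind]
    simp

section LieAlgebra

variable {F L : Type*} [Field F] [LieRing L] [LieAlgebra F L]

/-- `leftNormedSpan V n` is spanned by the left-normed brackets of `n + 1` elements of `V`. -/
def leftNormedSpan (V : Submodule F L) : ℕ → Submodule F L
  | 0 => V
  | n + 1 => Submodule.span F {w | ∃ u ∈ leftNormedSpan V n, ∃ a ∈ V, w = ⁅u, a⁆}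

theorem lie_mem_leftNormedSpan_succ {V : Submodule F L} {n : ℕ} {u a : L}
    (hu : u ∈ leftNormedSpan V n) (ha : a ∈ V) : ⁅u, a⁆ ∈ leftNormedSpan V (n + 1) :=
  Submodule.subset_span ⟨u, hu, a, ha, rfl⟩

theorem lie_mem_leftNormedSpan {V : Submodule F L} (n : ℕ) :
    ∀ m, ∀ u ∈ leftNormedSpan V m, ∀ v ∈ leftNormedSpan V n,
      ⁅u, v⁆ ∈ leftNormedSpan V (m + n + 1) := by
  induction n with
  | zero => exact fun m u hu v hv => lie_mem_leftNormedSpan_succ hu hv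
  | succ n ih =>
    intro m u hu v hv
    induction hv using Submodule.span_induction with
    | mem w hw =>
      obtain ⟨v, hv, a, ha, rfl⟩ := hw
      have h₁ : ⁅⁅u, v⁆, a⁆ ∈ leftNormedSpan V (m + n + 1 + 1) :=
        lie_mem_leftNormedSpan_succ (ih m u hu v hv) ha
      have h₂ : ⁅⁅u, a⁆, v⁆ ∈ leftNormedSpan V (m + 1 + n + 1) :=
        ih (m + 1) _ (lie_mem_leftNormedSpan_succ hu ha) v hv
      rw [show m + 1 + n + 1 = m + n + 1 + 1 by omega] at h₂
      rw [leibniz_lie, ← lie_skew v]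
      exact add_mem h₁ (neg_mem h₂)
    | zero => simp
    | add v w _ _ hv hw => simpa only [lie_add] using add_mem hv hw
    | smul r v _ hv => simpa only [lie_smul] using Submodule.smul_mem _ r hv

theorem lie_mem_iSup_leftNormedSpan {V : Submodule F L} {u v : L}
    (hu : u ∈ ⨆ n, leftNormedSpan V n) (hv : v ∈ ⨆ n, leftNormedSpan V n) :
    ⁅u, v⁆ ∈ ⨆ n, leftNormedSpan V n := by
  induction hu using Submodule.iSup_induction' with
  | mem m u hu =>
    induction hv using Submodule.iSup_induction' with
    | mem n v hv => exact Submodule.mem_iSup_of_mem _ (lie_mem_leftNormedSpan n m u hu v hv)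
    | zero => simp
    | add v w _ _ hv hw => simpa only [lie_add] using add_mem hv hw
  | zero => simp
  | add u w _ _ hu hw => simpa only [add_lie] using add_mem hu hw

theorem lieSpan_le_iSup_leftNormedSpan (V : Submodule F L) :
    (LieSubalgebra.lieSpan F L (V : Set L)).toSubmodule ≤ ⨆ n, leftNormedSpan V n := by
  intro x hx
  induction hx using LieSubalgebra.lieSpan_induction with
  | mem x hx => exact Submodule.mem_iSup_of_mem 0 hx
  | zero => exact zero_mem _
  | add x y _ _ hx hy => exact add_mem hx hy
  | smul r x _ hx => exact Submodule.smul_mem _ r hx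
  | lie x y _ _ hx hy => exact lie_mem_iSup_leftNormedSpan hx hy

theorem lie_eq_zero_of_mem_span_pair {x y z a : L} (hx : ⁅z, x⁆ = 0) (hy : ⁅z, y⁆ = 0)
    (ha : a ∈ Submodule.span F {x, y}) : ⁅z, a⁆ = 0 := by
  obtain ⟨α, β, rfl⟩ := Submodule.mem_span_pair.mp ha
  simp [hx, hy]

end LieAlgebra

section LieRing

variable {L : Type*} [LieRing L]

/-- `ad y` is a derivation vanishing on `z`, so `(ad y)² ⁅z, a⁆ = ⁅z, (ad y)² a⁆`. -/
theorem lie_lie_lie_eq_zero_of_lie_eq_zero_s11 {z a y : L} (hzy : ⁅z, y⁆ = 0)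
    (hay : ⁅y, ⁅a, y⁆⁆ = 0) : ⁅⁅⁅z, a⁆, y⁆, y⁆ = 0 := by
  have hz : ⁅⁅z, a⁆, y⁆ = ⁅z, ⁅a, y⁆⁆ := by rw [lie_lie, hzy, lie_zero, sub_zero]
  have ha : ⁅⁅a, y⁆, y⁆ = 0 := by rw [← lie_skew, hay, neg_zero]
  rw [hz, lie_lie, hzy, lie_zero, sub_zero, ha, lie_zero]

theorem two_nsmul_lie_lie_lie_eq_zero {w x y : L} (hwy : ⁅⁅w, y⁆, y⁆ = 0)
    (hxy : ⁅y, ⁅x, y⁆⁆ = 0) (hwx : ⁅⁅w, x⁆, y⁆ = 0) : 2 • ⁅⁅⁅w, y⁆, x⁆, y⁆ = 0 := by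
  have h₁ : ⁅⁅⁅w, y⁆, x⁆, y⁆ = ⁅⁅w, y⁆, ⁅x, y⁆⁆ := by rw [lie_lie, hwy, lie_zero, sub_zero]
  have h₂ : ⁅⁅w, y⁆, ⁅x, y⁆⁆ = ⁅⁅w, ⁅x, y⁆⁆, y⁆ := by
    rw [lie_lie, hxy, lie_zero, zero_sub, ← lie_skew, neg_neg]
  have h₃ : ⁅w, ⁅x, y⁆⁆ = -⁅⁅w, y⁆, x⁆ := by
    rw [lie_lie, sub_eq_zero] at hwx
    rw [hwx, ← lie_skew]
  rw [two_nsmul, ← eq_neg_iff_add_eq_zero]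
  conv_lhs => rw [h₁, h₂, h₃, neg_lie]

end LieRing

namespace IsThinGraded

variable {F L : Type*} [Field F] [LieRing L] [LieAlgebra F L] {C : ℕ → Submodule F L}

theorem leftNormedSpan_le (hC : IsThinGraded F L C) (n : ℕ) :
    leftNormedSpan (C 1) n ≤ C (n + 1) := by
  induction n with
  | zero => exact le_rfl
  | succ n ih =>
    refine Submodule.span_le.mpr ?_
    rintro _ ⟨u, hu, a, ha, rfl⟩
    exact hC.bracket_mem (n + 1) 1 u (ih hu) a ha

theorem leftNormedSpan_eq (hC : IsThinGraded F L C) (n : ℕ) :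
    leftNormedSpan (C 1) n = C (n + 1) := by
  refine (hC.internal.submodule_iSupIndep.comp Nat.succ_injective).eq_of_le_of_iSup_eq_top
    hC.leftNormedSpan_le (top_unique ?_) n
  calc ⊤ = (LieSubalgebra.lieSpan F L ((C 1 : Submodule F L) : Set L)).toSubmodule := by
        rw [hC.generates, LieSubalgebra.top_toSubmodule]
    _ ≤ ⨆ n, leftNormedSpan (C 1) n := lieSpan_le_iSup_leftNormedSpan _

theorem eq_bot_succ_of_eq_bot (hC : IsThinGraded F L C) {n : ℕ} (h : C (n + 1) = ⊥) :
    C (n + 2) = ⊥ := by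
  rw [← hC.leftNormedSpan_eq, leftNormedSpan, hC.leftNormedSpan_eq, h, Submodule.span_eq_bot]
  rintro _ ⟨u, hu, a, -, rfl⟩
  rw [(Submodule.mem_bot F).mp hu, zero_lie]

theorem ne_bot_of_le (hC : IsThinGraded F L C) {m n : ℕ} (hm : 1 ≤ m) (hmn : m ≤ n)
    (hn : C n ≠ ⊥) : C m ≠ ⊥ := by
  induction n, hmn using Nat.le_induction with
  | base => exact hn
  | succ n hmn ih =>
    obtain ⟨k, rfl⟩ : ∃ k, n = k + 1 := ⟨n - 1, by omega⟩
    exact ih fun h => hn (hC.eq_bot_succ_of_eq_bot h)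

theorem eq_zero_of_forall_lie_eq_zero (hC : IsThinGraded F L C) {i : ℕ} {z : L} (hz : z ∈ C i)
    (hne : C (i + 1) ≠ ⊥) (h : ∀ a ∈ C 1, ⁅z, a⁆ = 0) : z = 0 := by
  by_contra hz0
  apply hne
  rw [← hC.covering i z hz hz0, Submodule.span_eq_bot]
  rintro _ ⟨a, ha, rfl⟩
  exact h a ha

section Centralizer

variable {y : L}

theorem lie_lie_eq_zero_of_le_two (hC : IsThinGraded F L C) (hy1 : y ∈ C 1)
    (hyc : ∀ v ∈ C 2, ⁅y, v⁆ = 0) {i : ℕ} (hi : i ≤ 2) {u : L} (hu : u ∈ C i) :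
    ⁅⁅u, y⁆, y⁆ = 0 := by
  interval_cases i
  · rw [hC.zero_bot, Submodule.mem_bot] at hu
    rw [hu, zero_lie, zero_lie]
  · rw [← lie_skew, hyc _ (hC.bracket_mem 1 1 u hu y hy1), neg_zero]
  · rw [← lie_skew u, hyc u hu, neg_zero, zero_lie]

theorem lie_lie_eq_zero_of_lie_eq_zero (hC : IsThinGraded F L C) (hy1 : y ∈ C 1)
    (hyc : ∀ v ∈ C 2, ⁅y, v⁆ = 0) {i : ℕ} {v u : L} (hv : v ∈ C i) (hv0 : v ≠ 0)
    (hvy : ⁅v, y⁆ = 0) (hu : u ∈ C (i + 1)) : ⁅⁅u, y⁆, y⁆ = 0 := by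
  rw [← hC.covering i v hv hv0] at hu
  induction hu using Submodule.span_induction with
  | mem w hw =>
    obtain ⟨a, ha, rfl⟩ := hw
    exact lie_lie_lie_eq_zero_of_lie_eq_zero_s11 hvy (hyc _ (hC.bracket_mem 1 1 a ha y hy1))
  | zero => rw [zero_lie, zero_lie]
  | add a b _ _ ha hb => rw [add_lie, add_lie, ha, hb, add_zero]
  | smul r a _ ha => rw [smul_lie, smul_lie, ha, smul_zero]

variable {x : L}

theorem lie_eq_zero_of_forall_mem_succ (hC : IsThinGraded F L C) (h2 : ringChar F ≠ 2)
    (hy1 : y ∈ C 1) (hyc : ∀ v ∈ C 2, ⁅y, v⁆ = 0)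
    (hxy : Submodule.span F {x, y} = C 1) {k : ℕ} (hne : C (k + 2) ≠ ⊥)
    (hinj : ∀ v ∈ C (k + 2), ⁅v, y⁆ = 0 → v = 0) (hsucc : ∀ w ∈ C (k + 1), ⁅w, y⁆ = 0)
    {w : L} (hw : w ∈ C k) : ⁅w, y⁆ = 0 := by
  have hx1 : x ∈ C 1 := hxy ▸ Submodule.subset_span (Set.mem_insert x {y})
  have hz : ⁅w, y⁆ ∈ C (k + 1) := hC.bracket_mem k 1 w hw y hy1
  have hzx : ⁅⁅w, y⁆, x⁆ = 0 := by
    refine hinj _ (hC.bracket_mem (k + 1) 1 _ hz x hx1) ?_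
    have h := two_nsmul_lie_lie_lie_eq_zero (hsucc _ hz)
      (hyc _ (hC.bracket_mem 1 1 x hx1 y hy1)) (hsucc _ (hC.bracket_mem k 1 w hw x hx1))
    rw [two_nsmul, ← two_smul F] at h
    exact (smul_eq_zero.mp h).resolve_left (Ring.two_ne_zero h2)
  refine hC.eq_zero_of_forall_lie_eq_zero hz hne fun a ha => ?_
  exact lie_eq_zero_of_mem_span_pair hzx (hsucc _ hz) (hxy ▸ ha)

theorem eq_span_lie (hC : IsThinGraded F L C) (hxy : Submodule.span F {x, y} = C 1) {k : ℕ}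
    {w : L} (hw : w ∈ C k) (hw0 : w ≠ 0) (hwy : ⁅w, y⁆ = 0) :
    C (k + 1) = Submodule.span F {⁅w, x⁆} := by
  have hx1 : x ∈ C 1 := hxy ▸ Submodule.subset_span (Set.mem_insert x {y})
  refine le_antisymm ?_ ((Submodule.span_singleton_le_iff_mem _ _).mpr
    (hC.bracket_mem k 1 w hw x hx1))
  rw [← hC.covering k w hw hw0, Submodule.span_le]
  rintro _ ⟨a, ha, rfl⟩
  obtain ⟨α, β, rfl⟩ := Submodule.mem_span_pair.mp (hxy ▸ ha)
  rw [lie_add, lie_smul, lie_smul, hwy, smul_zero, add_zero]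
  exact Submodule.smul_mem _ α (Submodule.mem_span_singleton_self _)

theorem eq_span_singleton (hC : IsThinGraded F L C) (hxy : Submodule.span F {x, y} = C 1)
    {k : ℕ} (hne : C (k + 1) ≠ ⊥) (hcent : ∀ w ∈ C k, ⁅w, y⁆ = 0) {w : L} (hw : w ∈ C k)
    (hw0 : w ≠ 0) : C k = Submodule.span F {w} := by
  have hx1 : x ∈ C 1 := hxy ▸ Submodule.subset_span (Set.mem_insert x {y})
  refine le_antisymm (fun w' hw' => ?_) ((Submodule.span_singleton_le_iff_mem _ _).mpr hw)
  have hw'x : ⁅w', x⁆ ∈ Submodule.span F {⁅w, x⁆} :=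
    hC.eq_span_lie hxy hw hw0 (hcent w hw) ▸ hC.bracket_mem k 1 w' hw' x hx1
  obtain ⟨c, hc⟩ := Submodule.mem_span_singleton.mp hw'x
  have hd : w' - c • w ∈ C k := sub_mem hw' (Submodule.smul_mem _ c hw)
  have hd0 : w' - c • w = 0 := by
    refine hC.eq_zero_of_forall_lie_eq_zero hd hne fun a ha => ?_
    refine lie_eq_zero_of_mem_span_pair ?_ (hcent _ hd) (hxy ▸ ha)
    rw [sub_lie, smul_lie, hc, sub_self]
  rw [sub_eq_zero.mp hd0]
  exact Submodule.smul_mem _ c (Submodule.mem_span_singleton_self w)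

theorem finrank_succ_eq_one_and_finrank_eq_one (hC : IsThinGraded F L C)
    (hxy : Submodule.span F {x, y} = C 1) {k : ℕ} (hk : C k ≠ ⊥) (hne : C (k + 1) ≠ ⊥)
    (hcent : ∀ w ∈ C k, ⁅w, y⁆ = 0) :
    finrank F (C (k + 1)) = 1 ∧ finrank F (C k) = 1 := by
  obtain ⟨w, hw, hw0⟩ := (Submodule.ne_bot_iff _).mp hk
  have hwx : ⁅w, x⁆ ≠ 0 := fun h => hw0 <| hC.eq_zero_of_forall_lie_eq_zero hw hne
    fun a ha => lie_eq_zero_of_mem_span_pair h (hcent w hw) (hxy ▸ ha)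
  rw [hC.eq_span_lie hxy hw hw0 (hcent w hw), hC.eq_span_singleton hxy hne hcent hw hw0]
  exact ⟨finrank_span_singleton hwx, finrank_span_singleton hw0⟩

end Centralizer

end IsThinGraded

theorem thin_minimal_yy_general {F L : Type*} [Field F] [LieRing L] [LieAlgebra F L]
    (h2 : ringChar F ≠ 2)
    {C : ℕ → Submodule F L} (hthin : IsThinGraded F L C)
    {y : L} (hy1 : y ∈ C 1) (hy0 : y ≠ 0) (hyc : ∀ v ∈ C 2, ⁅y, v⁆ = 0)
    {j : ℕ} (hj : ∃ u ∈ C j, ⁅⁅u, y⁆, y⁆ ≠ 0)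
    (hmin : ∀ i < j, ∀ u ∈ C i, ⁅⁅u, y⁆, y⁆ = 0) :
    Module.finrank F (C (j - 2)) = 1 ∧ Module.finrank F (C (j - 3)) = 1 ∧
    (∀ u ∈ C (j - 2), ⁅u, y⁆ = 0) ∧ (∀ u ∈ C (j - 3), ⁅u, y⁆ = 0) := by
  obtain ⟨u, hu, huy⟩ := hj
  obtain ⟨k, rfl⟩ : ∃ k, j = k + 3 := ⟨j - 3, by
    by_contra! hj
    exact huy (hthin.lie_lie_eq_zero_of_le_two hy1 hyc (by omega) hu)⟩
  obtain ⟨x, hxy⟩ := exists_span_pair_eq hthin.dim_one hy1 hy0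
  have hu0 : u ≠ 0 := by rintro rfl; simp at huy
  have hne : ∀ m, 1 ≤ m → m ≤ k + 3 → C m ≠ ⊥ := fun m hm hmk =>
    hthin.ne_bot_of_le hm hmk ((Submodule.ne_bot_iff _).mpr ⟨u, hu, hu0⟩)
  have hinj : ∀ v ∈ C (k + 2), ⁅v, y⁆ = 0 → v = 0 := fun v hv hvy => by
    by_contra hv0
    exact huy (hthin.lie_lie_eq_zero_of_lie_eq_zero hy1 hyc hv hv0 hvy hu)
  have hA : ∀ w ∈ C (k + 1), ⁅w, y⁆ = 0 := fun w hw =>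
    hinj _ (hthin.bracket_mem _ 1 w hw y hy1) (hmin (k + 1) (by omega) w hw)
  have hk : 1 ≤ k := by
    refine Nat.one_le_iff_ne_zero.mpr fun hk => hy0 ?_
    subst hk
    exact hthin.eq_zero_of_forall_lie_eq_zero hy1 (hne 2 le_add_self (by omega))
      fun a ha => by rw [← lie_skew, hA a ha, neg_zero]
  have hB : ∀ w ∈ C k, ⁅w, y⁆ = 0 := fun w hw =>
    hthin.lie_eq_zero_of_forall_mem_succ h2 hy1 hyc hxy (hne (k + 2) (by omega) (by omega))
      hinj hA hw
  obtain ⟨hdim₁, hdim₀⟩ := hthin.finrank_succ_eq_one_and_finrank_eq_one hxy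
    (hne k hk (by omega)) (hne (k + 1) (by omega) (by omega)) hB
  exact ⟨hdim₁, hdim₀, hA, hB⟩

/-- If `j` is minimal with `[L_j y y] ≠ 0`, then `L_{j-2}` and `L_{j-3}` are
one-dimensional and centralized by `y`. -/
theorem thin_minimal_yy {F L : Type*} [Field F] [LieRing L] [LieAlgebra F L]
    (hp : ringChar F ≠ 0) (h2 : ringChar F ≠ 2)
    {C : ℕ → Submodule F L} (hthin : IsThinGraded F L C)
    (h3 : Module.finrank F (C 3) = 1)
    {y : L} (hy1 : y ∈ C 1) (hy0 : y ≠ 0) (hyc : ∀ v ∈ C 2, ⁅y, v⁆ = 0)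
    {j : ℕ} (hj : ∃ u ∈ C j, ⁅⁅u, y⁆, y⁆ ≠ 0)
    (hmin : ∀ i < j, ∀ u ∈ C i, ⁅⁅u, y⁆, y⁆ = 0) :
    Module.finrank F (C (j - 2)) = 1 ∧ Module.finrank F (C (j - 3)) = 1 ∧
    (∀ u ∈ C (j - 2), ⁅u, y⁆ = 0) ∧ (∀ u ∈ C (j - 3), ⁅u, y⁆ = 0) :=
  thin_minimal_yy_general h2 hthin hy1 hy0 hyc hj hmin
end

section
/- Let L be a thin Lie algebra over an algebraically closed field. Then no two consecutive homogeneous components L_j and L_{j+1} can both be two-dimensional. -/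
/-!
By the covering property, bracketing with a nonzero `z ∈ Lⱼ` maps `L₁` onto `Lⱼ₊₁`. If `Lⱼ` and
`Lⱼ₊₁` were both 2-dimensional, `z ↦ ad z` would thus give a 2-dimensional space of linear maps
`L₁ → Lⱼ₊₁` between spaces of equal dimension whose nonzero members are all invertible. Over an
algebraically closed field every such pencil contains a nonzero singular member.
-/

open Module

section Pencil

variable {K U V W : Type*} [Field K] [IsAlgClosed K]
  [AddCommGroup U] [Module K U]
  [AddCommGroup V] [Module K V] [FiniteDimensional K V] [Nontrivial V]
  [AddCommGroup W] [Module K W]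

theorem LinearEquiv.exists_ne_zero_apply_eq_smul_apply (e : V ≃ₗ[K] W) (g : V →ₗ[K] W) :
    ∃ (μ : K) (v : V), v ≠ 0 ∧ g v = μ • e v := by
  obtain ⟨μ, hμ⟩ := Module.End.exists_eigenvalue (e.symm.toLinearMap ∘ₗ g)
  obtain ⟨v, hv⟩ := hμ.exists_hasEigenvector
  refine ⟨μ, v, hv.2, ?_⟩
  have := congrArg e hv.apply_eq_smul
  simpa using this

/-- The pencil `Φ u₂ - μ • Φ u₁` through an invertible `Φ u₁` is singular at an eigenvalue `μ`
of `(Φ u₁)⁻¹ ∘ Φ u₂`, which exists because `K` is algebraically closed. -/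
theorem LinearMap.exists_ne_zero_not_surjective_of_one_lt_finrank [FiniteDimensional K W]
    (Φ : U →ₗ[K] V →ₗ[K] W) (hU : 1 < finrank K U) (hVW : finrank K V = finrank K W) :
    ∃ u, u ≠ 0 ∧ ¬ Function.Surjective (Φ u) := by
  have : Nontrivial U := Module.nontrivial_of_finrank_pos (zero_lt_one.trans hU)
  obtain ⟨u₁, hu₁⟩ := exists_ne (0 : U)
  by_cases h₁ : Function.Surjective (Φ u₁)
  swap
  · exact ⟨u₁, hu₁, h₁⟩
  obtain ⟨u₂, hli⟩ := exists_linearIndependent_pair_of_one_lt_finrank hU hu₁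
  let e : V ≃ₗ[K] W := LinearEquiv.ofBijective (Φ u₁)
    ⟨(LinearMap.injective_iff_surjective_of_finrank_eq_finrank hVW).2 h₁, h₁⟩
  obtain ⟨μ, v, hv, hμv⟩ := e.exists_ne_zero_apply_eq_smul_apply (Φ u₂)
  have hu : u₂ - μ • u₁ ≠ 0 := sub_ne_zero.2 ((LinearIndependent.pair_iff' hu₁).1 hli μ).symm
  refine ⟨u₂ - μ • u₁, hu, fun hs => hv ?_⟩
  apply (LinearMap.injective_iff_surjective_of_finrank_eq_finrank hVW).2 hs
  rw [map_sub, map_smul, LinearMap.sub_apply, LinearMap.smul_apply, hμv, map_zero]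
  exact sub_self _

end Pencil

namespace IsThinGraded

variable {F L : Type*} [Field F] [LieRing L] [LieAlgebra F L] {C : ℕ → Submodule F L}

def bracket (h : IsThinGraded F L C) (i : ℕ) : C i →ₗ[F] C 1 →ₗ[F] C (i + 1) :=
  LinearMap.mk₂ F (fun z a => ⟨⁅(z : L), (a : L)⁆, h.bracket_mem i 1 z z.2 a a.2⟩)
    (fun _ _ _ => Subtype.ext (add_lie _ _ _)) (fun _ _ _ => Subtype.ext (smul_lie _ _ _))
    (fun _ _ _ => Subtype.ext (lie_add _ _ _)) (fun _ _ _ => Subtype.ext (lie_smul _ _ _))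

theorem bracket_surjective (h : IsThinGraded F L C) {i : ℕ} {z : C i} (hz : z ≠ 0) :
    Function.Surjective (h.bracket i z) := by
  have himage : {w : L | ∃ a ∈ C 1, w = ⁅(z : L), a⁆} = LieAlgebra.ad F L z '' (C 1 : Set L) := by
    ext w
    simp only [Set.mem_ofPred_eq, Set.mem_image, SetLike.mem_coe, LieAlgebra.ad_apply, eq_comm]
  have hmap : (C 1).map (LieAlgebra.ad F L z) = C (i + 1) := by
    rw [← h.covering i z z.2 (by simpa using hz), himage, Submodule.span_image, Submodule.span_eq]
  intro y
  obtain ⟨a, ha, hay⟩ : (y : L) ∈ (C 1).map (LieAlgebra.ad F L z) := by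
    rw [hmap]
    exact y.2
  exact ⟨⟨a, ha⟩, Subtype.ext hay⟩

end IsThinGraded

/-- Over an algebraically closed field, no two consecutive homogeneous
components of a thin Lie algebra are both diamonds. -/
theorem thin_no_consecutive_diamonds_algClosed {F L : Type*} [Field F] [IsAlgClosed F]
    [LieRing L] [LieAlgebra F L]
    {C : ℕ → Submodule F L} (hthin : IsThinGraded F L C) (j : ℕ) :
    ¬ (Module.finrank F (C j) = 2 ∧ Module.finrank F (C (j + 1)) = 2) := by
  rintro ⟨hj, hj1⟩
  have : FiniteDimensional F (C 1) := Module.finite_of_finrank_eq_succ hthin.dim_one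
  have : FiniteDimensional F (C (j + 1)) := Module.finite_of_finrank_eq_succ hj1
  have : Nontrivial (C 1) := Module.nontrivial_of_finrank_eq_succ hthin.dim_one
  obtain ⟨z, hz, hns⟩ := (hthin.bracket j).exists_ne_zero_not_surjective_of_one_lt_finrank
    (by omega) (hthin.dim_one.trans hj1.symm)
  exact hns (hthin.bracket_surjective hz)
end
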